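/- arXiv:1704.04938 — 2 statements merged into one kernel-verified Lean document; each statement's English description precedes it below -/
import Mathlib

section
/- Suppose f : ℝ → ℝ is globally Lipschitz with Lipschitz constant k. Then for every continuous u : ℝ^N → ℝ with ‖u‖_ρ < ∞, the function F(u) = -u + J *_ρ (f∘u) + h is continuous with ‖F(u)‖_ρ ≤ ‖u‖_ρ + ‖J‖_{L¹(ℝ^N)} ‖ρ‖_∞ (k ‖u‖_ρ + |f(0)| ‖ρ‖_∞) + ‖h‖_ρ; in particular F maps the weighted space C_ρ(ℝ^N) into itself. -/
/-!
Since `f` is `k`-Lipschitz, `|f (u y)| ρ y ≤ k |u y| ρ y + |f 0| ρ y`, so `g := (f ∘ u) ρ` is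
bounded and continuous, and `J *_ρ (f ∘ u)` is the ordinary convolution `J ⋆ g`. A convolution
of an integrable kernel with a bounded continuous function is continuous, and for `J ≥ 0` it is
bounded by `‖J‖_{L¹} sup |g|`. Multiplying by `ρ ≤ ‖ρ‖_∞` and adding the weighted bounds on `u`
and `h` gives the estimate.
-/

open MeasureTheory Real

/-- The weighted convolution `(J *_ρ v)(x) = ∫ J(x-y) v(y) ρ(y) dy` on `ℝ^N`. -/
noncomputable def convW {N : ℕ} (J ρ v : (Fin N → ℝ) → ℝ) (x : Fin N → ℝ) : ℝ :=
  ∫ y, J (x - y) * v y * ρ y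

open Set ContinuousLinearMap
open scoped Convolution

theorem nonneg_of_abs_sub_le_mul {f : ℝ → ℝ} {k : ℝ} (hf : ∀ a b, |f a - f b| ≤ k * |a - b|) :
    0 ≤ k := by
  simpa using (abs_nonneg _).trans (hf 1 0)

theorem abs_le_mul_abs_add_of_abs_sub_le_mul {f : ℝ → ℝ} {k : ℝ}
    (hf : ∀ a b, |f a - f b| ≤ k * |a - b|) (a : ℝ) : |f a| ≤ k * |a| + |f 0| := by
  calc |f a| = |f a - f 0 + f 0| := by rw [sub_add_cancel]
    _ ≤ |f a - f 0| + |f 0| := abs_add_le _ _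
    _ ≤ k * |a| + |f 0| := by simpa using hf a 0

theorem continuous_of_abs_sub_le_mul {f : ℝ → ℝ} {k : ℝ}
    (hf : ∀ a b, |f a - f b| ≤ k * |a - b|) : Continuous f :=
  (LipschitzWith.of_dist_le' (K := k) fun a b => by
    simpa only [Real.dist_eq] using hf a b).continuous

section Weighted

variable {X : Type*} {ρ : X → ℝ}

theorem abs_comp_mul_le_ciSup {f : ℝ → ℝ} {k : ℝ} (hf : ∀ a b, |f a - f b| ≤ k * |a - b|)
    {u : X → ℝ} (hρ0 : ∀ x, 0 ≤ ρ x) (hρ : BddAbove (range ρ))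
    (hu : BddAbove (range fun x => |u x| * ρ x)) (x : X) :
    |f (u x) * ρ x| ≤ k * (⨆ z, |u z| * ρ z) + |f 0| * ⨆ z, ρ z := by
  have hk := nonneg_of_abs_sub_le_mul hf
  calc |f (u x) * ρ x| = |f (u x)| * ρ x := by rw [abs_mul, abs_of_nonneg (hρ0 x)]
    _ ≤ (k * |u x| + |f 0|) * ρ x :=
        mul_le_mul_of_nonneg_right (abs_le_mul_abs_add_of_abs_sub_le_mul hf _) (hρ0 x)
    _ = k * (|u x| * ρ x) + |f 0| * ρ x := by ring
    _ ≤ k * (⨆ z, |u z| * ρ z) + |f 0| * ⨆ z, ρ z := by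
        gcongr
        exacts [le_ciSup hu x, le_ciSup hρ x]

theorem bddAbove_range_abs_mul_of_abs_le {h : X → ℝ} (hh : ∃ C, ∀ x, |h x| ≤ C)
    (hρ0 : ∀ x, 0 ≤ ρ x) (hρ : BddAbove (range ρ)) :
    BddAbove (range fun x => |h x| * ρ x) := by
  obtain ⟨C, hC⟩ := hh
  obtain ⟨M, hM⟩ := hρ
  refine ⟨C * M, forall_mem_range.2 fun x => ?_⟩
  exact mul_le_mul (hC x) (hM (mem_range_self x)) (hρ0 x) ((abs_nonneg _).trans (hC x))

end Weighted

theorem abs_convolution_mul_le {G : Type*} [AddGroup G] [MeasurableSpace G] {μ : Measure G}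
    {J g : G → ℝ} {C : ℝ} (hJ : Integrable J μ) (hJ0 : ∀ x, 0 ≤ J x) (hg : ∀ x, |g x| ≤ C)
    (x : G) : |(J ⋆[mul ℝ ℝ, μ] g) x| ≤ (∫ y, J y ∂μ) * C := by
  rw [convolution_mul, ← integral_mul_const, ← Real.norm_eq_abs]
  refine norm_integral_le_of_norm_le (hJ.mul_const C) (ae_of_all _ fun y => ?_)
  rw [Real.norm_eq_abs, abs_mul, abs_of_nonneg (hJ0 y)]
  exact mul_le_mul_of_nonneg_left (hg _) (hJ0 y)

theorem convW_eq_convolution {N : ℕ} (J ρ v : (Fin N → ℝ) → ℝ) :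
    convW J ρ v = J ⋆[mul ℝ ℝ] fun y => v y * ρ y := by
  ext x
  rw [convolution_mul_swap]
  simp only [convW, mul_assoc]

theorem F_maps_Crho_into_itself_general {N : ℕ}
    (J ρ h : (Fin N → ℝ) → ℝ)
    (hJint : Integrable J) (hJpos : ∀ x, 0 ≤ J x)
    (hρcont : Continuous ρ) (hρpos : ∀ x, 0 ≤ ρ x)
    (hρbdd : BddAbove (Set.range ρ))
    (hhcont : Continuous h) (hhbdd : ∃ C, ∀ x, |h x| ≤ C)
    (f : ℝ → ℝ) (k : ℝ) (hf : ∀ a b : ℝ, |f a - f b| ≤ k * |a - b|)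
    (u : (Fin N → ℝ) → ℝ) (hucont : Continuous u)
    (hubdd : BddAbove (Set.range fun x => |u x| * ρ x)) :
    Continuous (fun x => -u x + convW J ρ (fun y => f (u y)) x + h x) ∧
    ∀ x, |(-u x + convW J ρ (fun y => f (u y)) x + h x)| * ρ x ≤
      (⨆ z, |u z| * ρ z) +
        (∫ y, J y) * (⨆ z, ρ z) * (k * (⨆ z, |u z| * ρ z) + |f 0| * (⨆ z, ρ z)) +
        (⨆ z, |h z| * ρ z) := by
  set C := k * (⨆ z, |u z| * ρ z) + |f 0| * ⨆ z, ρ z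
  have hg : ∀ y, |f (u y) * ρ y| ≤ C := abs_comp_mul_le_ciSup hf hρpos hρbdd hubdd
  have hconv := convW_eq_convolution J ρ fun y => f (u y)
  have hconv_le : ∀ x, |convW J ρ (fun y => f (u y)) x| ≤ (∫ y, J y) * C := by
    rw [hconv]; exact abs_convolution_mul_le hJint hJpos hg
  refine ⟨?_, fun x => ?_⟩
  · have hgcont := ((continuous_of_abs_sub_le_mul hf).comp hucont).mul hρcont
    have hgbdd : BddAbove (range fun y => ‖f (u y) * ρ y‖) := ⟨C, forall_mem_range.2 hg⟩
    rw [hconv]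
    exact (hucont.neg.add (hgbdd.continuous_convolution_right_of_integrable _ hJint hgcont)).add
      hhcont
  · have hJC : 0 ≤ (∫ y, J y) * C := (abs_nonneg _).trans (hconv_le x)
    calc |(-u x + convW J ρ (fun y => f (u y)) x + h x)| * ρ x
        ≤ (|u x| + |convW J ρ (fun y => f (u y)) x| + |h x|) * ρ x := by
          gcongr
          · exact hρpos x
          · simpa only [abs_neg] using abs_add_three (-u x) _ (h x)
      _ = |u x| * ρ x + |convW J ρ (fun y => f (u y)) x| * ρ x + |h x| * ρ x := by ring
      _ ≤ (⨆ z, |u z| * ρ z) + (∫ y, J y) * C * (⨆ z, ρ z) + (⨆ z, |h z| * ρ z) := by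
          gcongr ?_ + ?_ + ?_
          · exact le_ciSup hubdd x
          · exact mul_le_mul (hconv_le x) (le_ciSup hρbdd x) (hρpos x) hJC
          · exact le_ciSup (bddAbove_range_abs_mul_of_abs_le hhbdd hρpos hρbdd) x
      _ = _ := by ring

/-- if `f` is globally Lipschitz with constant `k`, then
`F(u) = -u + J *_ρ (f∘u) + h` maps `C_ρ(ℝ^N)` into itself, with
`‖F(u)‖_ρ ≤ ‖u‖_ρ + ‖J‖_{L¹} ‖ρ‖_∞ (k ‖u‖_ρ + |f(0)| ‖ρ‖_∞) + ‖h‖_ρ`. -/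
theorem F_maps_Crho_into_itself {N : ℕ} (hN : 1 ≤ N)
    (J ρ h : (Fin N → ℝ) → ℝ)
    (hJint : Integrable J) (hJpos : ∀ x, 0 ≤ J x)
    (hρcont : Continuous ρ) (hρpos : ∀ x, 0 ≤ ρ x)
    (hρbdd : BddAbove (Set.range ρ)) (hρint : Integrable ρ)
    (hhcont : Continuous h) (hhbdd : ∃ C, ∀ x, |h x| ≤ C)
    (f : ℝ → ℝ) (k : ℝ) (hf : ∀ a b : ℝ, |f a - f b| ≤ k * |a - b|)
    (u : (Fin N → ℝ) → ℝ) (hucont : Continuous u)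
    (hubdd : BddAbove (Set.range fun x => |u x| * ρ x)) :
    Continuous (fun x => -u x + convW J ρ (fun y => f (u y)) x + h x) ∧
    ∀ x, |(-u x + convW J ρ (fun y => f (u y)) x + h x)| * ρ x ≤
      (⨆ z, |u z| * ρ z) +
        (∫ y, J y) * (⨆ z, ρ z) * (k * (⨆ z, |u z| * ρ z) + |f 0| * (⨆ z, ρ z)) +
        (⨆ z, |h z| * ρ z) :=
  F_maps_Crho_into_itself_general J ρ h hJint hJpos hρcont hρpos hρbdd hhcont hhbdd f k hf u hucont
    hubdd
end

section
/- Suppose f : ℝ → ℝ is globally Lipschitz. Then for every continuous u₀ : ℝ^N → ℝ with ‖u₀‖_ρ < ∞ there exists a unique continuous function u : ℝ^N × [0,∞) → ℝ such that u(·,0) = u₀, for each T > 0 the quantity sup_{t∈[0,T]} ‖u(·,t)‖_ρ is finite, and u satisfies the variation of constants formula u(x,t) = e^{-t} u₀(x) + ∫₀^t e^{s-t} [(J *_ρ (f∘u(·,s)))(x) + h(x)] ds for all x ∈ ℝ^N and t ≥ 0; i.e. the Cauchy problem for ∂_t u = -u + J *_ρ (f∘u) + h is well posed in C_ρ(ℝ^N)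 with globally defined solutions. -/
/-!
Existence is proved for the convolution term rather than for the solution. For a bounded
continuous `r` on `ℝ^N × ℝ`, the linear problem `∂ₜu = -u + e^{γt} r + h` is solved explicitly by
`forcedSol u₀ h γ r`, whose weighted size `|u| ρ` grows at most like `e^{γt}`; hence
`r ↦ e^{-γt} J *_ρ (f ∘ forcedSol u₀ h γ r)` maps bounded continuous functions to bounded
continuous functions. With the Bielecki exponent `γ = ‖J‖₁ · Lip f · sup ρ` this map contracts the
sup norm by `γ / (1 + γ)`, and its fixed point gives a mild solution. Working with `r` avoids the
weighted space itself, whose seminorm `‖·‖_ρ` degenerates where `ρ` vanishes.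

Uniqueness: the weighted difference `d = |u - v| ρ` of two mild solutions satisfies
`d(t) ≤ γ ∫₀ᵗ sup d`, so iterating gives `d ≤ B (γt)ⁿ / n! → 0`. As `J *_ρ` only sees values where
`ρ > 0`, the two convolution terms, hence the two solutions, agree.
-/

open MeasureTheory Real

/-- `u` is a globally defined mild solution in `C_ρ(ℝ^N)` of
`∂_t u = -u + J *_ρ (f∘u) + h` with initial datum `u₀`: it is continuous on
`ℝ^N × [0,∞)`, starts at `u₀`, has `sup_{t∈[0,T]} ‖u(·,t)‖_ρ < ∞` for each `T > 0`, and
satisfies the variation of constants formula. -/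
def IsMildSolutionCrho {N : ℕ} (J ρ h : (Fin N → ℝ) → ℝ) (f : ℝ → ℝ)
    (u₀ : (Fin N → ℝ) → ℝ) (u : (Fin N → ℝ) → ℝ → ℝ) : Prop :=
  ContinuousOn (fun p : (Fin N → ℝ) × ℝ => u p.1 p.2) (Set.univ ×ˢ Set.Ici (0 : ℝ)) ∧
  (∀ x, u x 0 = u₀ x) ∧
  (∀ T : ℝ, 0 < T → ∃ C : ℝ, ∀ t ∈ Set.Icc (0:ℝ) T, ∀ x, |u x t| * ρ x ≤ C) ∧
  (∀ x, ∀ t : ℝ, 0 ≤ t →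
    u x t = Real.exp (-t) * u₀ x +
      ∫ s in (0:ℝ)..t, Real.exp (s - t) * (convW J ρ (fun y => f (u y s)) x + h x))

open Set Topology
open scoped NNReal BoundedContinuousFunction

theorem integral_exp_sub_mul_exp {γ : ℝ} (hγ : 1 + γ ≠ 0) (t : ℝ) :
    ∫ s in (0:ℝ)..t, exp (s - t) * exp (γ * s) = (exp (γ * t) - exp (-t)) / (1 + γ) := by
  have hF : ∀ s, HasDerivAt (fun s => exp ((1 + γ) * s - t) / (1 + γ))
      (exp (s - t) * exp (γ * s)) s := by
    intro s
    refine ((((hasDerivAt_id s).const_mul (1 + γ)).sub_const t).exp.div_const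
      (1 + γ)).congr_deriv ?_
    rw [← exp_add]
    field_simp
    simp only [id]
    ring_nf
  rw [intervalIntegral.integral_eq_sub_of_hasDerivAt (fun s _ => hF s)
    ((by fun_prop : Continuous fun s => exp (s - t) * exp (γ * s)).intervalIntegrable 0 t)]
  ring_nf

theorem abs_integral_exp_sub_mul_le {g : ℝ → ℝ} {γ D t : ℝ} (hγ : 0 ≤ γ) (ht : 0 ≤ t)
    (hD : 0 ≤ D) (hg : ∀ s ∈ Ioc 0 t, |g s| ≤ D * exp (γ * s)) :
    |∫ s in (0:ℝ)..t, exp (s - t) * g s| ≤ D * exp (γ * t) / (1 + γ) :=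
  calc |∫ s in (0:ℝ)..t, exp (s - t) * g s|
      ≤ ∫ s in (0:ℝ)..t, D * (exp (s - t) * exp (γ * s)) := by
        rw [← Real.norm_eq_abs]
        refine intervalIntegral.norm_integral_le_of_norm_le ht (ae_of_all _ fun s hs => ?_)
          ((by fun_prop : Continuous fun s => D * (exp (s - t) * exp (γ * s))).intervalIntegrable
            (μ := volume) 0 t)
        rw [norm_mul, norm_of_nonneg (exp_pos _).le, Real.norm_eq_abs, mul_left_comm]
        exact mul_le_mul_of_nonneg_left (hg s hs) (exp_pos _).le
    _ = D * ((exp (γ * t) - exp (-t)) / (1 + γ)) := by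
        rw [intervalIntegral.integral_const_mul, integral_exp_sub_mul_exp (by linarith)]
    _ ≤ D * exp (γ * t) / (1 + γ) := by
        rw [mul_div_assoc]
        gcongr
        linarith [exp_pos (-t)]

theorem le_zero_of_le_mul_integral {ι : Type*} {d : ι → ℝ → ℝ} {B K T : ℝ}
    (hB : ∀ i, ∀ s ∈ Icc 0 T, d i s ≤ B)
    (hd : ∀ g : ℝ → ℝ, Continuous g → (∀ i, ∀ s ∈ Icc 0 T, d i s ≤ g s) →
      ∀ i, ∀ s ∈ Icc 0 T, d i s ≤ K * ∫ σ in (0:ℝ)..s, g σ) :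
    ∀ i, ∀ s ∈ Icc 0 T, d i s ≤ 0 := by
  have iterate : ∀ n : ℕ, ∀ i, ∀ s ∈ Icc 0 T, d i s ≤ B * ((K * s) ^ n / n.factorial) := by
    intro n
    induction n with
    | zero => simpa using hB
    | succ n ih =>
      intro i s hs
      refine (hd _ (by fun_prop) ih i s hs).trans_eq ?_
      simp only [mul_pow, ← mul_div_assoc, intervalIntegral.integral_div,
        intervalIntegral.integral_const_mul, integral_pow, Nat.factorial_succ]
      push_cast
      field_simp
      ring
  intro i s hs
  have hlim := (FloorSemiring.tendsto_pow_div_factorial_atTop (K * s)).const_mul B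
  rw [mul_zero] at hlim
  exact ge_of_tendsto' hlim (iterate · i s hs)

section Convolution

variable {N : ℕ} {J ρ v w : (Fin N → ℝ) → ℝ}

theorem convW_eq_integral_comp_sub (J ρ v : (Fin N → ℝ) → ℝ) (x : Fin N → ℝ) :
    convW J ρ v x = ∫ z, J z * (v (x - z) * ρ (x - z)) := by
  rw [convW, ← integral_sub_left_eq_self _ volume x]
  simp only [sub_sub_cancel, mul_assoc]

theorem integrable_convW_integrand {C : ℝ} (hJ : Integrable J)
    (hvρ : AEStronglyMeasurable fun y => v y * ρ y) (hC : ∀ y, |v y * ρ y| ≤ C)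
    (x : Fin N → ℝ) : Integrable fun y => J (x - y) * v y * ρ y := by
  simp only [mul_assoc]
  exact (hJ.comp_sub_left x).mul_bdd hvρ (ae_of_all _ hC)

theorem abs_convW_le {C : ℝ} (hJ : Integrable J) (hC : ∀ y, |v y * ρ y| ≤ C)
    (x : Fin N → ℝ) : |convW J ρ v x| ≤ (∫ z, |J z|) * C :=
  calc |convW J ρ v x| ≤ ∫ y, |J (x - y)| * C := by
        rw [← Real.norm_eq_abs, convW]
        refine norm_integral_le_of_norm_le ((hJ.comp_sub_left x).abs.mul_const C)
          (ae_of_all _ fun y => ?_)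
        rw [mul_assoc, norm_mul, Real.norm_eq_abs, Real.norm_eq_abs]
        exact mul_le_mul_of_nonneg_left (hC y) (abs_nonneg _)
    _ = (∫ z, |J z|) * C := by
        rw [integral_mul_const, integral_sub_left_eq_self (fun z => |J z|)]

theorem abs_convW_sub_convW_le {C : ℝ} {x : Fin N → ℝ} (hJ : Integrable J)
    (hv : Integrable fun y => J (x - y) * v y * ρ y)
    (hw : Integrable fun y => J (x - y) * w y * ρ y) (hC : ∀ y, |(v y - w y) * ρ y| ≤ C) :
    |convW J ρ v x - convW J ρ w x| ≤ (∫ z, |J z|) * C := by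
  have hsub : convW J ρ v x - convW J ρ w x = convW J ρ (v - w) x := by
    rw [convW, convW, convW, ← integral_sub hv hw]
    congr 1 with y
    simp only [Pi.sub_apply]
    ring
  rw [hsub]
  exact abs_convW_le hJ hC x

theorem continuousOn_convW {S : Set ℝ} {w : (Fin N → ℝ) → ℝ → ℝ} (hJ : Integrable J)
    (hρ : Continuous ρ) (hw : ContinuousOn (fun p : (Fin N → ℝ) × ℝ => w p.1 p.2) (univ ×ˢ S))
    (hbd : ∀ T, ∃ C, ∀ y, ∀ t ∈ S, t ≤ T → |w y t * ρ y| ≤ C) :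
    ContinuousOn (fun p : (Fin N → ℝ) × ℝ => convW J ρ (fun y => w y p.2) p.1) (univ ×ˢ S) := by
  simp only [convW_eq_integral_comp_sub]
  intro p₀ hp₀
  obtain ⟨C, hC⟩ := hbd (p₀.2 + 1)
  have hshift : ∀ z, MapsTo (fun p : (Fin N → ℝ) × ℝ => (p.1 - z, p.2)) (univ ×ˢ S) (univ ×ˢ S) :=
    fun z p hp => ⟨mem_univ _, hp.2⟩
  have hnear : ∀ᶠ p in 𝓝[univ ×ˢ S] p₀, p ∈ univ ×ˢ S ∧ p.2 ≤ p₀.2 + 1 :=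
    eventually_mem_nhdsWithin.and <| nhdsWithin_le_nhds <|
      (continuous_snd.tendsto p₀).eventually (eventually_le_nhds (by linarith))
  refine continuousWithinAt_of_dominated (bound := fun z => |J z| * C) ?_ ?_
    (hJ.abs.mul_const C) (ae_of_all _ fun z => ?_)
  · filter_upwards [hnear] with p hp
    have hwp : Continuous fun z => w (p.1 - z) p.2 :=
      hw.comp_continuous (by fun_prop) fun z => hshift z hp.1
    exact hJ.aestronglyMeasurable.mul ((hwp.mul (by fun_prop)).aestronglyMeasurable)
  · filter_upwards [hnear] with p hp
    refine ae_of_all _ fun z => ?_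
    rw [norm_mul, Real.norm_eq_abs, Real.norm_eq_abs]
    exact mul_le_mul_of_nonneg_left (hC _ _ hp.1.2 hp.2) (abs_nonneg _)
  · have hwz : ContinuousOn (fun p : (Fin N → ℝ) × ℝ => w (p.1 - z) p.2) (univ ×ˢ S) :=
      hw.comp (by fun_prop) (hshift z)
    exact continuousWithinAt_const.mul
      ((hwz p₀ hp₀).mul
        (by fun_prop : Continuous fun p : (Fin N → ℝ) × ℝ => ρ (p.1 - z)).continuousWithinAt)

end Convolution

theorem abs_comp_mul_le_of_lipschitzWith {f : ℝ → ℝ} {K : ℝ≥0} (hf : LipschitzWith K f)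
    {r M : ℝ} (hr : 0 ≤ r) (hrM : r ≤ M) (a : ℝ) :
    |f a * r| ≤ |f 0| * M + K * (|a| * r) := by
  have hgrowth : |f a| ≤ |f 0| + K * |a| := by
    have := hf.dist_le_mul a 0
    rw [Real.dist_eq, Real.dist_eq, sub_zero] at this
    linarith [abs_sub_abs_le_abs_sub (f a) (f 0)]
  calc |f a * r| = |f a| * r := by rw [abs_mul, abs_of_nonneg hr]
    _ ≤ (|f 0| + K * |a|) * r := mul_le_mul_of_nonneg_right hgrowth hr
    _ ≤ |f 0| * M + K * (|a| * r) := by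
        rw [add_mul, mul_assoc]
        gcongr

theorem abs_sub_comp_mul_le_of_lipschitzWith {f : ℝ → ℝ} {K : ℝ≥0} (hf : LipschitzWith K f)
    {r : ℝ} (hr : 0 ≤ r) (a b : ℝ) : |(f a - f b) * r| ≤ K * (|a - b| * r) := by
  rw [abs_mul, abs_of_nonneg hr, ← mul_assoc]
  gcongr
  simpa only [Real.dist_eq] using hf.dist_le_mul a b

section Existence

variable {N : ℕ} {J ρ u₀ h : (Fin N → ℝ) → ℝ} {f : ℝ → ℝ} {K : ℝ≥0} {γ Mρ B₀ Ch : ℝ}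
  {r : (Fin N → ℝ) × ℝ →ᵇ ℝ}

noncomputable def forcedSol (u₀ h : (Fin N → ℝ) → ℝ) (γ : ℝ) (r : (Fin N → ℝ) × ℝ →ᵇ ℝ)
    (x : Fin N → ℝ) (t : ℝ) : ℝ :=
  exp (-max t 0) * u₀ x +
    ∫ s in (0:ℝ)..max t 0, exp (s - max t 0) * (exp (γ * s) * r (x, s) + h x)

theorem forcedSol_of_nonneg {t : ℝ} (ht : 0 ≤ t) (x : Fin N → ℝ) :
    forcedSol u₀ h γ r x t =
      exp (-t) * u₀ x + ∫ s in (0:ℝ)..t, exp (s - t) * (exp (γ * s) * r (x, s) + h x) := by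
  rw [forcedSol, max_eq_left ht]

theorem continuous_forcedSol (hu₀ : Continuous u₀) (hh : Continuous h) :
    Continuous fun p : (Fin N → ℝ) × ℝ => forcedSol u₀ h γ r p.1 p.2 := by
  unfold forcedSol
  refine .add (by fun_prop) (intervalIntegral.continuous_parametric_intervalIntegral_of_continuous
    (f := fun (p : (Fin N → ℝ) × ℝ) (s : ℝ) =>
      exp (s - max p.2 0) * (exp (γ * s) * r (p.1, s) + h p.1)) ?_ (by fun_prop))
  fun_prop

theorem abs_forcedSol_le (hγ : 0 ≤ γ) (x : Fin N → ℝ) (t : ℝ) :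
    |forcedSol u₀ h γ r x t| ≤ |u₀ x| + (‖r‖ + |h x|) * exp (γ * max t 0) := by
  have hτ : 0 ≤ max t 0 := le_max_right t 0
  have hint := abs_integral_exp_sub_mul_le (g := fun s => exp (γ * s) * r (x, s) + h x) hγ hτ
    (by positivity : 0 ≤ ‖r‖ + |h x|) fun s hs => by
      have hexp : 1 ≤ exp (γ * s) := one_le_exp (mul_nonneg hγ hs.1.le)
      calc |exp (γ * s) * r (x, s) + h x| ≤ exp (γ * s) * ‖r‖ + |h x| := by
            refine (abs_add_le _ _).trans (add_le_add_left ?_ _)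
            rw [abs_mul, abs_of_pos (exp_pos _)]
            exact mul_le_mul_of_nonneg_left (r.norm_coe_le_norm _) (exp_pos _).le
        _ ≤ (‖r‖ + |h x|) * exp (γ * s) := by nlinarith [abs_nonneg (h x)]
  have hdecay : |exp (-max t 0) * u₀ x| ≤ |u₀ x| := by
    rw [abs_mul, abs_of_pos (exp_pos _)]
    exact mul_le_of_le_one_left (abs_nonneg _) (exp_le_one_iff.2 (by linarith))
  refine (abs_add_le _ _).trans (add_le_add hdecay (hint.trans ?_))
  exact div_le_self (by positivity) (by linarith)

theorem abs_forcedSol_sub_le (hγ : 0 ≤ γ) (r₁ r₂ : (Fin N → ℝ) × ℝ →ᵇ ℝ) (x : Fin N → ℝ) (t : ℝ) :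
    |forcedSol u₀ h γ r₁ x t - forcedSol u₀ h γ r₂ x t| ≤
      dist r₁ r₂ * exp (γ * max t 0) / (1 + γ) := by
  have hsub : forcedSol u₀ h γ r₁ x t - forcedSol u₀ h γ r₂ x t =
      ∫ s in (0:ℝ)..max t 0, exp (s - max t 0) * (exp (γ * s) * (r₁ (x, s) - r₂ (x, s))) := by
    rw [forcedSol, forcedSol, add_sub_add_left_eq_sub,
      ← intervalIntegral.integral_sub (Continuous.intervalIntegrable (by fun_prop) _ _)
        (Continuous.intervalIntegrable (by fun_prop) _ _)]
    congr 1 with s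
    ring
  rw [hsub]
  refine abs_integral_exp_sub_mul_le hγ (le_max_right t 0) dist_nonneg fun s _ => ?_
  rw [abs_mul, abs_of_pos (exp_pos _), mul_comm, ← Real.dist_eq]
  exact mul_le_mul_of_nonneg_right (r₁.dist_coe_le_dist _) (exp_pos _).le

theorem abs_forcedSol_mul_le (hγ : 0 ≤ γ) (hρ0 : ∀ x, 0 ≤ ρ x) (hMρ : ∀ x, ρ x ≤ Mρ)
    (hB₀ : ∀ x, |u₀ x| * ρ x ≤ B₀) (hCh : ∀ x, |h x| ≤ Ch) (x : Fin N → ℝ) (t : ℝ) :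
    |forcedSol u₀ h γ r x t| * ρ x ≤ B₀ + (‖r‖ + Ch) * Mρ * exp (γ * max t 0) :=
  calc |forcedSol u₀ h γ r x t| * ρ x
      ≤ (|u₀ x| + (‖r‖ + |h x|) * exp (γ * max t 0)) * ρ x :=
        mul_le_mul_of_nonneg_right (abs_forcedSol_le hγ x t) (hρ0 x)
    _ = |u₀ x| * ρ x + (‖r‖ + |h x|) * ρ x * exp (γ * max t 0) := by ring
    _ ≤ B₀ + (‖r‖ + Ch) * Mρ * exp (γ * max t 0) := by
        have : 0 ≤ ‖r‖ + Ch := by linarith [norm_nonneg r, abs_nonneg (h x), hCh x]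
        gcongr
        exacts [hB₀ x, hρ0 x, hCh x, hMρ x]

theorem abs_comp_forcedSol_mul_le (hf : LipschitzWith K f) (hγ : 0 ≤ γ) (hρ0 : ∀ x, 0 ≤ ρ x)
    (hMρ : ∀ x, ρ x ≤ Mρ) (hB₀ : ∀ x, |u₀ x| * ρ x ≤ B₀) (hCh : ∀ x, |h x| ≤ Ch)
    (x : Fin N → ℝ) (t : ℝ) :
    |f (forcedSol u₀ h γ r x t) * ρ x| ≤
      |f 0| * Mρ + K * (B₀ + (‖r‖ + Ch) * Mρ * exp (γ * max t 0)) :=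
  (abs_comp_mul_le_of_lipschitzWith hf (hρ0 x) (hMρ x) _).trans <| by
    gcongr
    exact abs_forcedSol_mul_le hγ hρ0 hMρ hB₀ hCh x t

noncomputable def picardMap (J ρ u₀ h : (Fin N → ℝ) → ℝ) (f : ℝ → ℝ) (γ : ℝ)
    (r : (Fin N → ℝ) × ℝ →ᵇ ℝ) (p : (Fin N → ℝ) × ℝ) : ℝ :=
  exp (-(γ * max p.2 0)) * convW J ρ (fun y => f (forcedSol u₀ h γ r y p.2)) p.1

theorem continuous_picardMap (hJ : Integrable J) (hρ : Continuous ρ) (hρ0 : ∀ x, 0 ≤ ρ x)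
    (hMρ : ∀ x, ρ x ≤ Mρ) (hu₀ : Continuous u₀) (hB₀ : ∀ x, |u₀ x| * ρ x ≤ B₀)
    (hh : Continuous h) (hCh : ∀ x, |h x| ≤ Ch) (hf : LipschitzWith K f) (hγ : 0 ≤ γ) :
    Continuous (picardMap J ρ u₀ h f γ r) := by
  have hbd : ∀ T, ∃ C, ∀ y, ∀ t ∈ (univ : Set ℝ), t ≤ T →
      |f (forcedSol u₀ h γ r y t) * ρ y| ≤ C := fun T =>
    ⟨|f 0| * Mρ + K * (B₀ + (‖r‖ + Ch) * Mρ * exp (γ * max T 0)), fun y t _ htT => by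
      have hrCh : 0 ≤ ‖r‖ + Ch := by linarith [norm_nonneg r, abs_nonneg (h y), hCh y]
      have hMρ0 : 0 ≤ Mρ := (hρ0 y).trans (hMρ y)
      refine (abs_comp_forcedSol_mul_le hf hγ hρ0 hMρ hB₀ hCh y t).trans ?_
      gcongr⟩
  have hconv := continuousOn_convW hJ hρ
    (hf.continuous.comp (continuous_forcedSol hu₀ hh)).continuousOn hbd
  rw [univ_prod_univ, continuousOn_univ] at hconv
  exact (by fun_prop : Continuous fun p : (Fin N → ℝ) × ℝ => exp (-(γ * max p.2 0))).mul hconv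

theorem abs_picardMap_le (hJ : Integrable J) (hρ0 : ∀ x, 0 ≤ ρ x) (hMρ : ∀ x, ρ x ≤ Mρ)
    (hB₀ : ∀ x, |u₀ x| * ρ x ≤ B₀) (hCh : ∀ x, |h x| ≤ Ch) (hf : LipschitzWith K f)
    (hγ : 0 ≤ γ) (p : (Fin N → ℝ) × ℝ) :
    |picardMap J ρ u₀ h f γ r p| ≤ (∫ z, |J z|) * (|f 0| * Mρ + K * (B₀ + (‖r‖ + Ch) * Mρ)) := by
  set E := exp (γ * max p.2 0)
  have hE : exp (-(γ * max p.2 0)) * E = 1 := by rw [← exp_add, neg_add_cancel, exp_zero]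
  have hE1 : exp (-(γ * max p.2 0)) ≤ 1 :=
    exp_le_one_iff.2 (neg_nonpos.2 (mul_nonneg hγ (le_max_right _ _)))
  have hMρ0 : 0 ≤ Mρ := (hρ0 0).trans (hMρ 0)
  have hB₀0 : 0 ≤ B₀ := (mul_nonneg (abs_nonneg _) (hρ0 0)).trans (hB₀ 0)
  have hconv := abs_convW_le hJ (abs_comp_forcedSol_mul_le (r := r) hf hγ hρ0 hMρ hB₀ hCh · p.2) p.1
  rw [picardMap, abs_mul, abs_of_pos (exp_pos _)]
  calc exp (-(γ * max p.2 0)) * |convW J ρ (fun y => f (forcedSol u₀ h γ r y p.2)) p.1|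
      ≤ exp (-(γ * max p.2 0)) *
          ((∫ z, |J z|) * (|f 0| * Mρ + K * (B₀ + (‖r‖ + Ch) * Mρ * E))) := by gcongr
    _ = (∫ z, |J z|) * (exp (-(γ * max p.2 0)) * (|f 0| * Mρ + K * B₀) +
          (exp (-(γ * max p.2 0)) * E) * (K * ((‖r‖ + Ch) * Mρ))) := by ring
    _ ≤ (∫ z, |J z|) * (|f 0| * Mρ + K * (B₀ + (‖r‖ + Ch) * Mρ)) := by
        rw [hE, one_mul, mul_add (K : ℝ) B₀, ← add_assoc]
        gcongr
        exact mul_le_of_le_one_left (by positivity) hE1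

theorem abs_picardMap_sub_le (hJ : Integrable J) (hρ : Continuous ρ) (hρ0 : ∀ x, 0 ≤ ρ x)
    (hMρ : ∀ x, ρ x ≤ Mρ) (hu₀ : Continuous u₀) (hB₀ : ∀ x, |u₀ x| * ρ x ≤ B₀)
    (hh : Continuous h) (hCh : ∀ x, |h x| ≤ Ch) (hf : LipschitzWith K f)
    (hγ : γ = (∫ z, |J z|) * K * Mρ) (r₁ r₂ : (Fin N → ℝ) × ℝ →ᵇ ℝ) (p : (Fin N → ℝ) × ℝ) :
    |picardMap J ρ u₀ h f γ r₁ p - picardMap J ρ u₀ h f γ r₂ p| ≤ γ / (1 + γ) * dist r₁ r₂ := by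
  have hMρ0 : 0 ≤ Mρ := (hρ0 0).trans (hMρ 0)
  have hγ0 : 0 ≤ γ := hγ ▸ mul_nonneg (mul_nonneg (integral_nonneg fun z => abs_nonneg _) K.2) hMρ0
  have hint : ∀ r : (Fin N → ℝ) × ℝ →ᵇ ℝ,
      Integrable fun y => J (p.1 - y) * f (forcedSol u₀ h γ r y p.2) * ρ y := fun r =>
    integrable_convW_integrand hJ
      ((hf.continuous.comp ((continuous_forcedSol hu₀ hh).comp (by fun_prop :
        Continuous fun y : Fin N → ℝ => (y, p.2)))).mul hρ).aestronglyMeasurable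
      (abs_comp_forcedSol_mul_le hf hγ0 hρ0 hMρ hB₀ hCh · p.2) p.1
  set E := exp (γ * max p.2 0)
  have hE : exp (-(γ * max p.2 0)) * E = 1 := by rw [← exp_add, neg_add_cancel, exp_zero]
  have hconv := abs_convW_sub_convW_le hJ (hint r₁) (hint r₂)
    (C := K * (Mρ * (dist r₁ r₂ * E / (1 + γ)))) fun y =>
      (abs_sub_comp_mul_le_of_lipschitzWith hf (hρ0 y) _ _).trans <| by
        rw [mul_comm (|_|)]
        gcongr
        exacts [hMρ y, abs_forcedSol_sub_le hγ0 r₁ r₂ y p.2]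
  rw [picardMap, picardMap, ← mul_sub, abs_mul, abs_of_pos (exp_pos _)]
  calc exp (-(γ * max p.2 0)) * |convW J ρ (fun y => f (forcedSol u₀ h γ r₁ y p.2)) p.1 -
        convW J ρ (fun y => f (forcedSol u₀ h γ r₂ y p.2)) p.1|
      ≤ exp (-(γ * max p.2 0)) * ((∫ z, |J z|) * (K * (Mρ * (dist r₁ r₂ * E / (1 + γ))))) := by
        gcongr
    _ = (exp (-(γ * max p.2 0)) * E) * ((∫ z, |J z|) * K * Mρ) / (1 + γ) * dist r₁ r₂ := by ring
    _ = γ / (1 + γ) * dist r₁ r₂ := by rw [hE, one_mul, hγ]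

theorem exists_fixedPoint_picardMap (hJ : Integrable J) (hρ : Continuous ρ)
    (hρ0 : ∀ x, 0 ≤ ρ x) (hMρ : ∀ x, ρ x ≤ Mρ) (hu₀ : Continuous u₀)
    (hB₀ : ∀ x, |u₀ x| * ρ x ≤ B₀) (hh : Continuous h) (hCh : ∀ x, |h x| ≤ Ch)
    (hf : LipschitzWith K f) (hγ : γ = (∫ z, |J z|) * K * Mρ) :
    ∃ r : (Fin N → ℝ) × ℝ →ᵇ ℝ, ∀ p, picardMap J ρ u₀ h f γ r p = r p := by
  have hγ0 : 0 ≤ γ := hγ ▸ mul_nonneg (mul_nonneg (integral_nonneg fun z => abs_nonneg _) K.2)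
    ((hρ0 0).trans (hMρ 0))
  let Φ (r : (Fin N → ℝ) × ℝ →ᵇ ℝ) : (Fin N → ℝ) × ℝ →ᵇ ℝ :=
    .ofNormedAddCommGroup _ (continuous_picardMap hJ hρ hρ0 hMρ hu₀ hB₀ hh hCh hf hγ0) _
      (abs_picardMap_le (r := r) hJ hρ0 hMρ hB₀ hCh hf hγ0)
  have hΦ : ContractingWith (γ / (1 + γ)).toNNReal Φ := by
    refine ⟨Real.toNNReal_lt_one.2 ((div_lt_one (by linarith)).2 (by linarith)),
      LipschitzWith.of_dist_le_mul fun r₁ r₂ => ?_⟩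
    rw [Real.coe_toNNReal _ (by positivity)]
    exact (BoundedContinuousFunction.dist_le (by positivity)).2
      (abs_picardMap_sub_le hJ hρ hρ0 hMρ hu₀ hB₀ hh hCh hf hγ r₁ r₂)
  exact ⟨ContractingWith.fixedPoint Φ hΦ, DFunLike.congr_fun hΦ.fixedPoint_isFixedPt⟩

theorem exists_isMildSolutionCrho (hJ : Integrable J) (hρ : Continuous ρ) (hρ0 : ∀ x, 0 ≤ ρ x)
    (hMρ : ∀ x, ρ x ≤ Mρ) (hu₀ : Continuous u₀) (hB₀ : ∀ x, |u₀ x| * ρ x ≤ B₀)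
    (hh : Continuous h) (hCh : ∀ x, |h x| ≤ Ch) (hf : LipschitzWith K f) :
    ∃ u, IsMildSolutionCrho J ρ h f u₀ u := by
  set γ := (∫ z, |J z|) * K * Mρ with hγ
  have hMρ0 : 0 ≤ Mρ := (hρ0 0).trans (hMρ 0)
  have hγ0 : 0 ≤ γ := mul_nonneg (mul_nonneg (integral_nonneg fun z => abs_nonneg _) K.2) hMρ0
  obtain ⟨r, hr⟩ := exists_fixedPoint_picardMap hJ hρ hρ0 hMρ hu₀ hB₀ hh hCh hf hγ
  have hrCh : 0 ≤ ‖r‖ + Ch := by linarith [norm_nonneg r, abs_nonneg (h 0), hCh 0]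
  refine ⟨forcedSol u₀ h γ r, (continuous_forcedSol hu₀ hh).continuousOn,
    fun x => by simp [forcedSol_of_nonneg le_rfl], fun T _ =>
      ⟨B₀ + (‖r‖ + Ch) * Mρ * exp (γ * max T 0), fun t ht x =>
        (abs_forcedSol_mul_le hγ0 hρ0 hMρ hB₀ hCh x t).trans (by gcongr; exact ht.2)⟩,
    fun x t ht => ?_⟩
  rw [forcedSol_of_nonneg ht]
  congr 1
  refine intervalIntegral.integral_congr fun s hs => ?_
  have hs0 : 0 ≤ s := (uIcc_of_le ht ▸ hs).1
  rw [← hr (x, s), picardMap, max_eq_left hs0, ← mul_assoc, ← exp_add, add_neg_cancel, exp_zero,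
    one_mul]

end Existence

namespace IsMildSolutionCrho

variable {N : ℕ} {J ρ u₀ h : (Fin N → ℝ) → ℝ} {f : ℝ → ℝ} {K : ℝ≥0} {Mρ : ℝ}
  {u v : (Fin N → ℝ) → ℝ → ℝ}

theorem continuous_slice (hu : IsMildSolutionCrho J ρ h f u₀ u) {t : ℝ} (ht : 0 ≤ t) :
    Continuous fun y => u y t :=
  hu.1.comp_continuous (by fun_prop : Continuous fun y : Fin N → ℝ => (y, t))
    fun y => ⟨mem_univ y, ht⟩

theorem exists_abs_comp_mul_le (hu : IsMildSolutionCrho J ρ h f u₀ u) (hf : LipschitzWith K f)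
    (hρ0 : ∀ x, 0 ≤ ρ x) (hMρ : ∀ x, ρ x ≤ Mρ) (T : ℝ) :
    ∃ C, ∀ y, ∀ t ∈ Ici (0:ℝ), t ≤ T → |f (u y t) * ρ y| ≤ C := by
  obtain ⟨C, hC⟩ := hu.2.2.1 (max T 1) (by positivity)
  refine ⟨|f 0| * Mρ + K * C, fun y t ht htT =>
    (abs_comp_mul_le_of_lipschitzWith hf (hρ0 y) (hMρ y) _).trans ?_⟩
  gcongr
  exact hC t ⟨ht, htT.trans (le_max_left _ _)⟩ y

theorem integrable_convW_integrand (hu : IsMildSolutionCrho J ρ h f u₀ u) (hJ : Integrable J)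
    (hρ : Continuous ρ) (hf : LipschitzWith K f) (hρ0 : ∀ x, 0 ≤ ρ x) (hMρ : ∀ x, ρ x ≤ Mρ)
    {t : ℝ} (ht : 0 ≤ t) (x : Fin N → ℝ) :
    Integrable fun y => J (x - y) * f (u y t) * ρ y := by
  obtain ⟨C, hC⟩ := hu.exists_abs_comp_mul_le hf hρ0 hMρ t
  exact _root_.integrable_convW_integrand hJ
    ((hf.continuous.comp (hu.continuous_slice ht)).mul hρ).aestronglyMeasurable
    (fun y => hC y t ht le_rfl) x

theorem continuousOn_convW (hu : IsMildSolutionCrho J ρ h f u₀ u) (hJ : Integrable J)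
    (hρ : Continuous ρ) (hf : LipschitzWith K f) (hρ0 : ∀ x, 0 ≤ ρ x) (hMρ : ∀ x, ρ x ≤ Mρ)
    (x : Fin N → ℝ) :
    ContinuousOn (fun s => convW J ρ (fun y => f (u y s)) x) (Ici 0) :=
  (_root_.continuousOn_convW (w := fun y t => f (u y t)) hJ hρ
    (hf.continuous.comp_continuousOn hu.1) (hu.exists_abs_comp_mul_le hf hρ0 hMρ)).comp
    (by fun_prop : Continuous fun s : ℝ => (x, s)).continuousOn fun _ hs => ⟨mem_univ x, hs⟩

theorem sub_eq_integral (hu : IsMildSolutionCrho J ρ h f u₀ u)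
    (hv : IsMildSolutionCrho J ρ h f u₀ v) (hJ : Integrable J) (hρ : Continuous ρ)
    (hf : LipschitzWith K f) (hρ0 : ∀ x, 0 ≤ ρ x) (hMρ : ∀ x, ρ x ≤ Mρ)
    (x : Fin N → ℝ) {t : ℝ} (ht : 0 ≤ t) :
    u x t - v x t = ∫ s in (0:ℝ)..t, exp (s - t) *
      (convW J ρ (fun y => f (u y s)) x - convW J ρ (fun y => f (v y s)) x) := by
  have hint : ∀ w, IsMildSolutionCrho J ρ h f u₀ w → IntervalIntegrable
      (fun s => exp (s - t) * (convW J ρ (fun y => f (w y s)) x + h x)) volume 0 t :=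
    fun w hw => ContinuousOn.intervalIntegrable <|
      (by fun_prop : Continuous fun s => exp (s - t)).continuousOn.mul
        (((hw.continuousOn_convW hJ hρ hf hρ0 hMρ x).mono
          (uIcc_of_le ht ▸ Icc_subset_Ici_self)).add continuousOn_const)
  rw [hu.2.2.2 x t ht, hv.2.2.2 x t ht, add_sub_add_left_eq_sub,
    ← intervalIntegral.integral_sub (hint u hu) (hint v hv)]
  congr 1 with s
  ring

theorem abs_sub_mul_le_integral (hu : IsMildSolutionCrho J ρ h f u₀ u)
    (hv : IsMildSolutionCrho J ρ h f u₀ v) (hJ : Integrable J) (hρ : Continuous ρ)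
    (hf : LipschitzWith K f) (hρ0 : ∀ x, 0 ≤ ρ x) (hMρ : ∀ x, ρ x ≤ Mρ) {T : ℝ} {g : ℝ → ℝ}
    (hg : Continuous g) (hdg : ∀ y, ∀ s ∈ Icc 0 T, |u y s - v y s| * ρ y ≤ g s)
    (x : Fin N → ℝ) {t : ℝ} (ht : t ∈ Icc 0 T) :
    |u x t - v x t| * ρ x ≤ Mρ * ((∫ z, |J z|) * K) * ∫ s in (0:ℝ)..t, g s := by
  have hconv : ∀ s ∈ Ioc 0 t, |convW J ρ (fun y => f (u y s)) x -
      convW J ρ (fun y => f (v y s)) x| ≤ (∫ z, |J z|) * K * g s := fun s hs =>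
    (abs_convW_sub_convW_le hJ (hu.integrable_convW_integrand hJ hρ hf hρ0 hMρ hs.1.le x)
      (hv.integrable_convW_integrand hJ hρ hf hρ0 hMρ hs.1.le x) fun y =>
        (abs_sub_comp_mul_le_of_lipschitzWith hf (hρ0 y) _ _).trans
          (mul_le_mul_of_nonneg_left (hdg y s ⟨hs.1.le, hs.2.trans ht.2⟩) K.2)).trans_eq
      (mul_assoc _ _ _).symm
  have hsub : |u x t - v x t| ≤ (∫ z, |J z|) * K * ∫ s in (0:ℝ)..t, g s := by
    rw [hu.sub_eq_integral hv hJ hρ hf hρ0 hMρ x ht.1, ← intervalIntegral.integral_const_mul,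
      ← Real.norm_eq_abs]
    refine intervalIntegral.norm_integral_le_of_norm_le ht.1 (ae_of_all _ fun s hs => ?_)
      ((hg.const_mul _).intervalIntegrable 0 t)
    rw [norm_mul, norm_of_nonneg (exp_pos _).le, Real.norm_eq_abs]
    exact (mul_le_of_le_one_left (abs_nonneg _) (exp_le_one_iff.2 (by linarith [hs.2]))).trans
      (hconv s hs)
  calc |u x t - v x t| * ρ x
      ≤ ((∫ z, |J z|) * K * ∫ s in (0:ℝ)..t, g s) * Mρ :=
        mul_le_mul hsub (hMρ x) (hρ0 x) ((abs_nonneg _).trans hsub)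
    _ = Mρ * ((∫ z, |J z|) * K) * ∫ s in (0:ℝ)..t, g s := by ring

theorem unique (hu : IsMildSolutionCrho J ρ h f u₀ u) (hv : IsMildSolutionCrho J ρ h f u₀ v)
    (hJ : Integrable J) (hρ : Continuous ρ) (hf : LipschitzWith K f) (hρ0 : ∀ x, 0 ≤ ρ x)
    (hMρ : ∀ x, ρ x ≤ Mρ) (x : Fin N → ℝ) {t : ℝ} (ht : 0 ≤ t) : u x t = v x t := by
  obtain ⟨Cu, hCu⟩ := hu.2.2.1 (t + 1) (by linarith)
  obtain ⟨Cv, hCv⟩ := hv.2.2.1 (t + 1) (by linarith)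
  have hweighted : ∀ y, ∀ s ∈ Icc 0 (t + 1), |u y s - v y s| * ρ y ≤ 0 :=
    le_zero_of_le_mul_integral (B := Cu + Cv)
      (fun y s hs => calc |u y s - v y s| * ρ y ≤ (|u y s| + |v y s|) * ρ y :=
            mul_le_mul_of_nonneg_right (abs_sub _ _) (hρ0 y)
          _ ≤ Cu + Cv := by rw [add_mul]; exact add_le_add (hCu s hs y) (hCv s hs y))
      fun g hg hdg y s hs => hu.abs_sub_mul_le_integral hv hJ hρ hf hρ0 hMρ hg hdg y hs
  have hconv : ∀ s ∈ uIcc 0 t,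
      convW J ρ (fun y => f (u y s)) x = convW J ρ (fun y => f (v y s)) x := by
    intro s hs
    rw [uIcc_of_le ht] at hs
    unfold convW
    congr 1 with y
    rcases (hρ0 y).eq_or_lt with hy | hy
    · rw [← hy, mul_zero, mul_zero]
    · have := hweighted y s ⟨hs.1, by linarith [hs.2]⟩
      dsimp only
      rw [sub_eq_zero.1 (abs_nonpos_iff.1 (nonpos_of_mul_nonpos_left this hy))]
  have hzero : EqOn (fun s => exp (s - t) *
      (convW J ρ (fun y => f (u y s)) x - convW J ρ (fun y => f (v y s)) x)) 0 (uIcc 0 t) :=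
    fun s hs => by simp only [hconv s hs, sub_self, mul_zero, Pi.zero_apply]
  rw [← sub_eq_zero, hu.sub_eq_integral hv hJ hρ hf hρ0 hMρ x ht,
    intervalIntegral.integral_congr hzero, Pi.zero_def, intervalIntegral.integral_zero]

end IsMildSolutionCrho

theorem cauchy_problem_well_posed_Crho_general {N : ℕ}
    (J ρ h : (Fin N → ℝ) → ℝ)
    (hJint : Integrable J)
    (hρcont : Continuous ρ) (hρpos : ∀ x, 0 ≤ ρ x)
    (hρbdd : BddAbove (Set.range ρ))
    (hhcont : Continuous h) (hhbdd : ∃ C, ∀ x, |h x| ≤ C)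
    (f : ℝ → ℝ) (k : ℝ) (hf : ∀ a b : ℝ, |f a - f b| ≤ k * |a - b|)
    (u₀ : (Fin N → ℝ) → ℝ) (hu₀c : Continuous u₀)
    (hu₀b : BddAbove (Set.range fun x => |u₀ x| * ρ x)) :
    (∃ u : (Fin N → ℝ) → ℝ → ℝ, IsMildSolutionCrho J ρ h f u₀ u) ∧
    (∀ u v : (Fin N → ℝ) → ℝ → ℝ,
      IsMildSolutionCrho J ρ h f u₀ u → IsMildSolutionCrho J ρ h f u₀ v →
      ∀ x, ∀ t : ℝ, 0 ≤ t → u x t = v x t) := by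
  obtain ⟨Mρ, hMρ⟩ := hρbdd
  obtain ⟨B₀, hB₀⟩ := hu₀b
  obtain ⟨Ch, hCh⟩ := hhbdd
  have hfL : LipschitzWith k.toNNReal f := LipschitzWith.of_dist_le_mul fun a b => by
    simpa only [Real.dist_eq, Real.coe_toNNReal'] using
      (hf a b).trans (mul_le_mul_of_nonneg_right (le_max_left k 0) (abs_nonneg _))
  exact ⟨exists_isMildSolutionCrho hJint hρcont hρpos (fun x => hMρ ⟨x, rfl⟩) hu₀c
      (fun x => hB₀ ⟨x, rfl⟩) hhcont hCh hfL,
    fun u v hu hv x t ht => hu.unique hv hJint hρcont hfL hρpos (fun x => hMρ ⟨x, rfl⟩) x ht⟩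

/-- if `f` is globally Lipschitz, the Cauchy problem for
`∂_t u = -u + J *_ρ (f∘u) + h` is well posed in `C_ρ(ℝ^N)` with globally defined
solutions: for every continuous `u₀` with `‖u₀‖_ρ < ∞` there is a unique globally
defined mild solution. -/
theorem cauchy_problem_well_posed_Crho {N : ℕ} (hN : 1 ≤ N)
    (J ρ h : (Fin N → ℝ) → ℝ)
    (hJint : Integrable J) (hJpos : ∀ x, 0 ≤ J x)
    (hρcont : Continuous ρ) (hρpos : ∀ x, 0 ≤ ρ x)
    (hρbdd : BddAbove (Set.range ρ)) (hρint : Integrable ρ)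
    (hhcont : Continuous h) (hhbdd : ∃ C, ∀ x, |h x| ≤ C)
    (f : ℝ → ℝ) (k : ℝ) (hf : ∀ a b : ℝ, |f a - f b| ≤ k * |a - b|)
    (u₀ : (Fin N → ℝ) → ℝ) (hu₀c : Continuous u₀)
    (hu₀b : BddAbove (Set.range fun x => |u₀ x| * ρ x)) :
    (∃ u : (Fin N → ℝ) → ℝ → ℝ, IsMildSolutionCrho J ρ h f u₀ u) ∧
    (∀ u v : (Fin N → ℝ) → ℝ → ℝ,
      IsMildSolutionCrho J ρ h f u₀ u → IsMildSolutionCrho J ρ h f u₀ v →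
      ∀ x, ∀ t : ℝ, 0 ≤ t → u x t = v x t) :=
  cauchy_problem_well_posed_Crho_general J ρ h hJint hρcont hρpos hρbdd hhcont hhbdd f k hf u₀ hu₀c
    hu₀b
end
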